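/- arXiv:0907.0214 — 2 statements merged into one kernel-verified Lean document; each statement's English description precedes it below -/
import Mathlib

section
/- If g : ℝ → ℝ is an even integrable function with ∫ g = 1, and Q, u are smooth compactly supported functions satisfying Q_t + (g∗Q)·u_x + (g∗u)·Q_x = 0, then the total integral ∫ Q(x,t) dx is constant in time. -/
open MeasureTheory Real Filter

private lemma integral_deriv_zero {f : ℝ → ℝ} (hf : ContDiff ℝ 1 f)
    (hsupp : HasCompactSupport f) : ∫ x, deriv f x = 0 := by
  have hint : Integrable (deriv f) :=
    (hf.continuous_deriv le_rfl).integrable_of_hasCompactSupport hsupp.deriv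
  have h2 := intervalIntegral.integral_Iic_add_Ioi (b := (0:ℝ)) hint.integrableOn hint.integrableOn
  rw [← h2, hsupp.integral_Iic_deriv_eq hf 0, hsupp.integral_Ioi_deriv_eq hf 0]
  ring

private lemma parts_aux {f h : ℝ → ℝ} (hf : ContDiff ℝ 1 f) (_hfc : HasCompactSupport f)
    (hh : ContDiff ℝ 1 h) (hhc : HasCompactSupport h) (z : ℝ) :
    ∫ x, f (x - z) * deriv h x = - ∫ x, deriv f (x - z) * h x := by
  have hfz : ContDiff ℝ 1 (fun x => f (x - z)) := hf.comp (contDiff_id.sub contDiff_const)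
  have hprod : ContDiff ℝ 1 (fun x => f (x - z) * h x) := hfz.mul hh
  have hprodc : HasCompactSupport (fun x => f (x - z) * h x) := hhc.mul_left
  have hder : ∀ x : ℝ, deriv (fun x => f (x - z) * h x) x
      = deriv f (x - z) * h x + f (x - z) * deriv h x := by
    intro x
    have h1 : HasDerivAt (fun x : ℝ => f (x - z)) (deriv f (x - z)) x := by
      simpa [Function.comp_def] using ((hf.differentiable one_ne_zero (x - z)).hasDerivAt.comp x
        ((hasDerivAt_id x).sub_const z))
    have h2 : HasDerivAt h (deriv h x) x := (hh.differentiable one_ne_zero x).hasDerivAt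
    exact (h1.mul h2).deriv
  have hzero : ∫ x, (deriv f (x - z) * h x + f (x - z) * deriv h x) = 0 := by
    rw [← integral_deriv_zero hprod hprodc]
    exact integral_congr_ae (Eventually.of_forall fun x => (hder x).symm)
  have i1 : Integrable (fun x => deriv f (x - z) * h x) := by
    apply Continuous.integrable_of_hasCompactSupport
    · exact ((hf.continuous_deriv le_rfl).comp (continuous_id.sub continuous_const)).mul
        hh.continuous
    · exact hhc.mul_left
  have i2 : Integrable (fun x => f (x - z) * deriv h x) := by
    apply Continuous.integrable_of_hasCompactSupport
    · exact (hf.continuous.comp (continuous_id.sub continuous_const)).mul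
        (hh.continuous_deriv le_rfl)
    · exact hhc.deriv.mul_left
  rw [integral_add i1 i2] at hzero
  linarith

private lemma odd_vanish {g Φ : ℝ → ℝ} (hg_even : ∀ x, g (-x) = g x) :
    ∫ z, g z * (Φ (-z) - Φ z) = 0 := by
  have h1 := integral_neg_eq_self (fun w => g w * (Φ (-w) - Φ w)) volume
  simp only [neg_neg, hg_even] at h1
  have h2 : ∀ z, g z * (Φ z - Φ (-z)) = -(g z * (Φ (-z) - Φ z)) := fun z => by ring
  simp_rw [h2, integral_neg] at h1
  linarith

private lemma core {g f h : ℝ → ℝ} (hg_even : ∀ x, g (-x) = g x) (hg : Integrable g)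
    (hf : ContDiff ℝ 1 f) (hfc : HasCompactSupport f)
    (hh : ContDiff ℝ 1 h) (hhc : HasCompactSupport h) :
    ∫ x, ((∫ y, g (x - y) * f y) * deriv h x + (∫ y, g (x - y) * h y) * deriv f x) = 0 := by
  obtain ⟨Cf, hCf⟩ := hfc.exists_bound_of_continuous hf.continuous
  obtain ⟨Ch, hCh⟩ := hhc.exists_bound_of_continuous hh.continuous
  have hint : ∀ (φ : ℝ → ℝ), Continuous φ → (∃ C, ∀ y, ‖φ y‖ ≤ C) → ∀ (x c : ℝ),
      Integrable (fun y => g (x - y) * φ y * c) := by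
    rintro φ hφ ⟨C, hC⟩ x c
    have h1 : Integrable (fun y => (φ y * c) * g (x - y)) := by
      apply (hg.comp_sub_left x).bdd_mul (c := C * ‖c‖) ((hφ.mul continuous_const).aestronglyMeasurable)
      exact Eventually.of_forall (fun y => by
        rw [Pi.mul_apply, norm_mul]
        exact mul_le_mul_of_nonneg_right (hC y) (norm_nonneg c))
    exact h1.congr (Eventually.of_forall fun y => by ring)
  have stepA : ∀ x : ℝ,
      (∫ y, g (x - y) * f y) * deriv h x + (∫ y, g (x - y) * h y) * deriv f x
        = ∫ z, g z * (f (x - z) * deriv h x + h (x - z) * deriv f x) := by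
    intro x
    rw [← integral_mul_const, ← integral_mul_const,
      ← integral_add (hint f hf.continuous ⟨Cf, hCf⟩ x (deriv h x))
        (hint h hh.continuous ⟨Ch, hCh⟩ x (deriv f x)),
      ← integral_sub_left_eq_self
        (fun z => g z * (f (x - z) * deriv h x + h (x - z) * deriv f x)) volume x]
    congr 1
    ext y
    simp only [sub_sub_cancel]
    ring
  have key : Integrable (Function.uncurry fun x z =>
      g z * (f (x - z) * deriv h x + h (x - z) * deriv f x)) (volume.prod volume) := by
    rw [Function.uncurry_def]
    have hb : Integrable (fun p : ℝ × ℝ =>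
        (‖deriv h p.1‖ + ‖deriv f p.1‖) * (max Cf Ch * ‖g p.2‖)) (volume.prod volume) := by
      exact Integrable.mul_prod
        ((((hh.continuous_deriv le_rfl).integrable_of_hasCompactSupport hhc.deriv).norm).add
          (((hf.continuous_deriv le_rfl).integrable_of_hasCompactSupport hfc.deriv).norm))
        (hg.norm.const_mul _)
    apply Integrable.mono' hb
    · apply AEStronglyMeasurable.mul
      · exact hg.aestronglyMeasurable.comp_snd
      · apply Continuous.aestronglyMeasurable
        exact ((hf.continuous.comp (continuous_fst.sub continuous_snd)).mul
            ((hh.continuous_deriv le_rfl).comp continuous_fst)).add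
          ((hh.continuous.comp (continuous_fst.sub continuous_snd)).mul
            ((hf.continuous_deriv le_rfl).comp continuous_fst))
    · refine Eventually.of_forall fun p => ?_
      have b1 : ‖f (p.1 - p.2)‖ ≤ max Cf Ch := (hCf _).trans (le_max_left _ _)
      have b2 : ‖h (p.1 - p.2)‖ ≤ max Cf Ch := (hCh _).trans (le_max_right _ _)
      simp only [Real.norm_eq_abs] at *
      have e1 : |g p.2 * (f (p.1 - p.2) * deriv h p.1 + h (p.1 - p.2) * deriv f p.1)|
          = |g p.2| * |f (p.1 - p.2) * deriv h p.1 + h (p.1 - p.2) * deriv f p.1| :=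
        abs_mul _ _
      have e2 : |f (p.1 - p.2) * deriv h p.1 + h (p.1 - p.2) * deriv f p.1|
          ≤ max Cf Ch * |deriv h p.1| + max Cf Ch * |deriv f p.1| := by
        refine (abs_add_le _ _).trans ?_
        rw [abs_mul, abs_mul]
        gcongr
      have hg0 : (0:ℝ) ≤ |g p.2| := abs_nonneg _
      calc |g p.2 * (f (p.1 - p.2) * deriv h p.1 + h (p.1 - p.2) * deriv f p.1)|
          ≤ |g p.2| * (max Cf Ch * |deriv h p.1| + max Cf Ch * |deriv f p.1|) := by
            rw [e1]; exact mul_le_mul_of_nonneg_left e2 hg0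
        _ = (|deriv h p.1| + |deriv f p.1|) * (max Cf Ch * |g p.2|) := by ring
  have stepC : ∀ z : ℝ, (∫ x, g z * (f (x - z) * deriv h x + h (x - z) * deriv f x))
      = g z * ((∫ x, deriv f (x - -z) * h x) - ∫ x, deriv f (x - z) * h x) := by
    intro z
    rw [MeasureTheory.integral_const_mul]
    congr 1
    have i1 : Integrable (fun x => f (x - z) * deriv h x) := by
      apply Continuous.integrable_of_hasCompactSupport
      · exact (hf.continuous.comp (continuous_id.sub continuous_const)).mul
          (hh.continuous_deriv le_rfl)
      · exact hhc.deriv.mul_left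
    have i2 : Integrable (fun x => h (x - z) * deriv f x) := by
      apply Continuous.integrable_of_hasCompactSupport
      · exact (hh.continuous.comp (continuous_id.sub continuous_const)).mul
          (hf.continuous_deriv le_rfl)
      · exact hfc.deriv.mul_left
    rw [integral_add i1 i2, parts_aux hf hfc hh hhc z]
    have tr : ∫ x, h (x - z) * deriv f x = ∫ x, deriv f (x - -z) * h x := by
      rw [← integral_add_right_eq_self (fun x => h (x - z) * deriv f x) z]
      congr 1
      ext x
      simp only [add_sub_cancel_right, sub_neg_eq_add]
      ring
    rw [tr]
    ring
  calc ∫ x, ((∫ y, g (x - y) * f y) * deriv h x + (∫ y, g (x - y) * h y) * deriv f x)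
      = ∫ x, ∫ z, g z * (f (x - z) * deriv h x + h (x - z) * deriv f x) :=
        integral_congr_ae (Eventually.of_forall stepA)
    _ = ∫ z, ∫ x, g z * (f (x - z) * deriv h x + h (x - z) * deriv f x) :=
        integral_integral_swap key
    _ = ∫ z, g z * ((∫ x, deriv f (x - -z) * h x) - ∫ x, deriv f (x - z) * h x) :=
        integral_congr_ae (Eventually.of_forall stepC)
    _ = 0 := odd_vanish (Φ := fun w => ∫ x, deriv f (x - w) * h x) hg_even

/-- For an even integrable kernel `g` with `∫ g = 1`, if `Q, u`
are smooth compactly supported functions of `(x, t)` satisfying the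
regularized conservation law `Q_t + (g∗Q) u_x + (g∗u) Q_x = 0`, then
`∫ Q(x,t) dx` is constant in time. -/
theorem stmt0
    (g : ℝ → ℝ) (hg_even : ∀ x, g (-x) = g x) (hg_int : Integrable g)
    (hg_norm : ∫ x, g x = 1)
    (Q u : ℝ → ℝ → ℝ)
    (hQ_smooth : ContDiff ℝ (⊤ : ℕ∞) (fun p : ℝ × ℝ => Q p.1 p.2))
    (hu_smooth : ContDiff ℝ (⊤ : ℕ∞) (fun p : ℝ × ℝ => u p.1 p.2))
    (hQ_supp : HasCompactSupport (fun p : ℝ × ℝ => Q p.1 p.2))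
    (hu_supp : HasCompactSupport (fun p : ℝ × ℝ => u p.1 p.2))
    (hPDE : ∀ x t,
      deriv (fun τ => Q x τ) t
        + (∫ y, g (x - y) * Q y t) * deriv (fun ξ => u ξ t) x
        + (∫ y, g (x - y) * u y t) * deriv (fun ξ => Q ξ t) x = 0) :
    ∀ t₁ t₂ : ℝ, ∫ x, Q x t₁ = ∫ x, Q x t₂ := by
  intro t₁ t₂
  -- compact slices
  have hK : IsCompact (Prod.fst '' tsupport (fun p : ℝ × ℝ => Q p.1 p.2)) :=
    hQ_supp.image continuous_fst
  have hKu : IsCompact (Prod.fst '' tsupport (fun p : ℝ × ℝ => u p.1 p.2)) :=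
    hu_supp.image continuous_fst
  have hQx0 : ∀ x, x ∉ Prod.fst '' tsupport (fun p : ℝ × ℝ => Q p.1 p.2) →
      ∀ τ, Q x τ = 0 := by
    intro x hx τ
    by_contra hne
    exact hx ⟨(x, τ), subset_closure (Function.mem_support.mpr hne), rfl⟩
  have hux0 : ∀ x, x ∉ Prod.fst '' tsupport (fun p : ℝ × ℝ => u p.1 p.2) →
      ∀ τ, u x τ = 0 := by
    intro x hx τ
    by_contra hne
    exact hx ⟨(x, τ), subset_closure (Function.mem_support.mpr hne), rfl⟩
  have hQt : ∀ t : ℝ, ContDiff ℝ 1 fun x => Q x t := fun t =>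
    (hQ_smooth.of_le (by simp)).comp (contDiff_id.prodMk contDiff_const)
  have hut : ∀ t : ℝ, ContDiff ℝ 1 fun x => u x t := fun t =>
    (hu_smooth.of_le (by simp)).comp (contDiff_id.prodMk contDiff_const)
  have hQtc : ∀ t : ℝ, HasCompactSupport fun x => Q x t := fun t =>
    HasCompactSupport.intro hK fun x hx => hQx0 x hx t
  have hutc : ∀ t : ℝ, HasCompactSupport fun x => u x t := fun t =>
    HasCompactSupport.intro hKu fun x hx => hux0 x hx t
  -- the time-derivative as a continuous compactly supported function
  set D : ℝ × ℝ → ℝ := fun p => fderiv ℝ (fun q : ℝ × ℝ => Q q.1 q.2) p (0, 1) with hD_def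
  have hD_cont : Continuous D :=
    (hQ_smooth.continuous_fderiv (by simp)).clm_apply continuous_const
  have hD_supp : HasCompactSupport D := hQ_supp.fderiv_apply ℝ ((0 : ℝ), (1 : ℝ))
  obtain ⟨C, hC⟩ := hD_supp.exists_bound_of_continuous hD_cont
  have hQdiff : ∀ x τ : ℝ, HasDerivAt (fun τ => Q x τ) (D (x, τ)) τ := by
    intro x τ
    have h1 : HasFDerivAt (fun p : ℝ × ℝ => Q p.1 p.2)
        (fderiv ℝ (fun p : ℝ × ℝ => Q p.1 p.2) (x, τ)) (x, τ) :=
      (hQ_smooth.differentiable (by simp) (x, τ)).hasFDerivAt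
    have h2 : HasDerivAt (fun s : ℝ => ((x : ℝ), s)) ((0 : ℝ), (1 : ℝ)) τ :=
      (hasDerivAt_const τ x).prodMk (hasDerivAt_id τ)
    exact h1.comp_hasDerivAt τ h2
  have hDzero : ∀ x, x ∉ Prod.fst '' tsupport (fun p : ℝ × ℝ => Q p.1 p.2) →
      ∀ τ, D (x, τ) = 0 := by
    intro x hx τ
    have hmem : (x, τ) ∉ tsupport (fun p : ℝ × ℝ => Q p.1 p.2) :=
      fun hmem => hx ⟨(x, τ), hmem, rfl⟩
    have h0 : fderiv ℝ (fun p : ℝ × ℝ => Q p.1 p.2) (x, τ) = 0 := by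
      by_contra hne
      exact hmem (support_fderiv_subset ℝ (Function.mem_support.mpr hne))
    rw [hD_def]
    simp [h0]
  have hbound_int : Integrable
      (Set.indicator (Prod.fst '' tsupport (fun p : ℝ × ℝ => Q p.1 p.2)) fun _ => C) :=
    (integrable_indicator_iff hK.measurableSet).mpr
      (integrableOn_const hK.measure_lt_top.ne)
  have h_bound : ∀ x τ : ℝ, ‖D (x, τ)‖ ≤
      Set.indicator (Prod.fst '' tsupport (fun p : ℝ × ℝ => Q p.1 p.2)) (fun _ => C) x := by
    intro x τ
    by_cases hx : x ∈ Prod.fst '' tsupport (fun p : ℝ × ℝ => Q p.1 p.2)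
    · rw [Set.indicator_of_mem hx]; exact hC _
    · rw [Set.indicator_of_notMem hx, hDzero x hx τ]; simp
  have hF : ∀ t : ℝ, HasDerivAt (fun τ => ∫ x, Q x τ) (∫ x, D (x, t)) t := by
    intro t
    have hres := hasDerivAt_integral_of_dominated_loc_of_deriv_le (F := fun τ x => Q x τ)
      (F' := fun τ x => D (x, τ))
      (bound := Set.indicator (Prod.fst '' tsupport (fun p : ℝ × ℝ => Q p.1 p.2)) fun _ => C)
      (μ := volume) (x₀ := t) (s := Set.univ) Filter.univ_mem
      (Eventually.of_forall fun τ => ((hQt τ).continuous).aestronglyMeasurable)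
      ((hQt t).continuous.integrable_of_hasCompactSupport (hQtc t))
      ((hD_cont.comp (continuous_id.prodMk continuous_const)).aestronglyMeasurable)
      (Eventually.of_forall fun x τ _ => h_bound x τ)
      hbound_int
      (Eventually.of_forall fun x τ _ => hQdiff x τ)
    exact hres.2
  have hval : ∀ t : ℝ, ∫ x, D (x, t) = 0 := by
    intro t
    have hpde : ∀ x, D (x, t) =
        -((∫ y, g (x - y) * Q y t) * deriv (fun ξ => u ξ t) x
          + (∫ y, g (x - y) * u y t) * deriv (fun ξ => Q ξ t) x) := by
      intro x
      rw [← (hQdiff x t).deriv]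
      linarith [hPDE x t]
    calc ∫ x, D (x, t)
        = ∫ x, -((∫ y, g (x - y) * Q y t) * deriv (fun ξ => u ξ t) x
            + (∫ y, g (x - y) * u y t) * deriv (fun ξ => Q ξ t) x) :=
          integral_congr_ae (Eventually.of_forall hpde)
      _ = -∫ x, ((∫ y, g (x - y) * Q y t) * deriv (fun ξ => u ξ t) x
            + (∫ y, g (x - y) * u y t) * deriv (fun ξ => Q ξ t) x) := integral_neg _
      _ = 0 := by
          rw [core hg_even hg_int (hQt t) (hQtc t) (hut t) (hutc t)]
          ring
  have hderiv0 : ∀ t : ℝ, deriv (fun τ => ∫ x, Q x τ) t = 0 := fun t => by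
    rw [(hF t).deriv, hval t]
  have hdiff : Differentiable ℝ fun τ => ∫ x, Q x τ := fun t => (hF t).differentiableAt
  exact is_const_of_deriv_eq_zero hdiff hderiv0 t₁ t₂
end

section
/- For α > 0, the function ū(x) defined piecewise as ((u_R−u_L)/2) exp((x−s)/α) + u_L for x < s and ((u_L−u_R)/2) exp(−(x−s)/α) + u_R for x ≥ s equals the convolution g^α ∗ u of the Helmholtz kernel with the step function u(x) = u_L for x < s, u_R for x ≥ s. -/
/-!
Write the step as `u_R + (u_L - u_R) • 1_{y < s}`. Since `y < s ↔ x - y ∈ (x - s, ∞)`, the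
convolution of any integrable `g` with it is `u_R ∫ g + (u_L - u_R) ∫_{x - s}^∞ g`. The Helmholtz
kernel has mass one, its tail beyond `t ≥ 0` is `exp (-t / α) / 2`, and by evenness its tail
beyond `t < 0` is `1 - exp (t / α) / 2`.
-/

open MeasureTheory Real Set

noncomputable def helmholtzKernel (α z : ℝ) : ℝ := exp (-|z| / α) / (2 * α)

theorem integral_comp_sub_mul_ite_lt {g : ℝ → ℝ} (hg : Integrable g) (x s a b : ℝ) :
    ∫ y, g (x - y) * (if y < s then a else b) =
      b * (∫ z, g z) + (a - b) * ∫ z in Ioi (x - s), g z := by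
  have hsplit : ∀ y, g (x - y) * (if y < s then a else b) =
      b * g (x - y) + (a - b) * (Ioi (x - s)).indicator g (x - y) := by
    intro y
    by_cases hy : y < s
    · rw [if_pos hy, indicator_of_mem (by simpa using hy)]; ring
    · rw [if_neg hy, indicator_of_notMem (by simpa using hy)]; ring
  simp_rw [hsplit]
  rw [integral_add ((hg.comp_sub_left x).const_mul b)
      (((hg.indicator measurableSet_Ioi).comp_sub_left x).const_mul _),
    integral_const_mul, integral_const_mul, integral_sub_left_eq_self, integral_sub_left_eq_self,
    integral_indicator measurableSet_Ioi]

section HelmholtzKernel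

variable {α : ℝ}

theorem helmholtzKernel_neg (z : ℝ) : helmholtzKernel α (-z) = helmholtzKernel α z := by
  rw [helmholtzKernel, helmholtzKernel, abs_neg]

theorem helmholtzKernel_eqOn_Ioi {t : ℝ} (ht : 0 ≤ t) :
    EqOn (helmholtzKernel α) (fun z => exp (-α⁻¹ * z) / (2 * α)) (Ioi t) := by
  intro z hz
  simp only [helmholtzKernel, abs_of_pos (ht.trans_lt hz)]
  ring_nf

theorem integrable_helmholtzKernel (hα : 0 < α) : Integrable (helmholtzKernel α) := by
  rw [← integrableOn_univ, ← Iic_union_Ioi (a := 0)]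
  refine IntegrableOn.union ?_ ?_
  · have hk : EqOn (fun z => exp (α⁻¹ * z) / (2 * α)) (helmholtzKernel α) (Iic 0) := by
      intro z hz
      simp only [helmholtzKernel, abs_of_nonpos (show z ≤ 0 from hz)]
      ring_nf
    exact IntegrableOn.congr_fun ((integrableOn_exp_mul_Iic (inv_pos.2 hα) 0).div_const _) hk
      measurableSet_Iic
  · exact IntegrableOn.congr_fun
      ((integrableOn_exp_mul_Ioi (neg_lt_zero.2 (inv_pos.2 hα)) 0).div_const _)
      (helmholtzKernel_eqOn_Ioi le_rfl).symm measurableSet_Ioi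

theorem setIntegral_Ioi_helmholtzKernel_of_nonneg (hα : 0 < α) {t : ℝ} (ht : 0 ≤ t) :
    ∫ z in Ioi t, helmholtzKernel α z = exp (-t / α) / 2 := by
  rw [setIntegral_congr_fun measurableSet_Ioi (helmholtzKernel_eqOn_Ioi ht), integral_div,
    integral_exp_mul_Ioi (neg_lt_zero.2 (inv_pos.2 hα))]
  field_simp

theorem integral_helmholtzKernel (hα : 0 < α) : ∫ z, helmholtzKernel α z = 1 := by
  calc ∫ z, helmholtzKernel α z = ∫ z, helmholtzKernel α |z| := by
        simp only [helmholtzKernel, abs_abs]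
    _ = 2 * ∫ z in Ioi 0, helmholtzKernel α z := integral_comp_abs
    _ = 1 := by
        rw [setIntegral_Ioi_helmholtzKernel_of_nonneg hα le_rfl, neg_zero, zero_div, exp_zero]
        norm_num

theorem setIntegral_Ioi_helmholtzKernel_of_neg (hα : 0 < α) {t : ℝ} (ht : t < 0) :
    ∫ z in Ioi t, helmholtzKernel α z = 1 - exp (t / α) / 2 := by
  have hIic : ∫ z in Iic t, helmholtzKernel α z = exp (t / α) / 2 := by
    calc ∫ z in Iic t, helmholtzKernel α z = ∫ z in Iic t, helmholtzKernel α (-z) := by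
          simp only [helmholtzKernel_neg]
      _ = ∫ z in Ioi (-t), helmholtzKernel α z := integral_comp_neg_Iic t _
      _ = exp (t / α) / 2 := by
          rw [setIntegral_Ioi_helmholtzKernel_of_nonneg hα (neg_nonneg.2 ht.le), neg_neg]
  rw [← integral_helmholtzKernel hα, ← hIic, ← intervalIntegral.integral_Iic_add_Ioi
    (integrable_helmholtzKernel hα).integrableOn (integrable_helmholtzKernel hα).integrableOn]
  ring

end HelmholtzKernel

/-- The Helmholtz filter of a step function is the explicit
piecewise-exponential profile. -/
theorem stmt4 (α s u_L u_R : ℝ) (hα : 0 < α) :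
    ∀ x : ℝ,
      (if x < s then (u_R - u_L) / 2 * Real.exp ((x - s) / α) + u_L
       else (u_L - u_R) / 2 * Real.exp (-(x - s) / α) + u_R)
      = ∫ y : ℝ, Real.exp (-|x - y| / α) / (2 * α) *
          (if y < s then u_L else u_R) := by
  intro x
  change _ = ∫ y, helmholtzKernel α (x - y) * (if y < s then u_L else u_R)
  rw [integral_comp_sub_mul_ite_lt (integrable_helmholtzKernel hα), integral_helmholtzKernel hα]
  split_ifs with hxs
  · rw [setIntegral_Ioi_helmholtzKernel_of_neg hα (sub_neg.2 hxs)]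
    ring
  · rw [setIntegral_Ioi_helmholtzKernel_of_nonneg hα (sub_nonneg.2 (not_lt.1 hxs))]
    ring
end
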